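/- arXiv:0803.3598 — 2 statements merged into one kernel-verified Lean document; each statement's English description precedes it below -/
import Mathlib

section
/- Let (B, {A_t, φ_t}_{t∈T}) be a continuous field of JB-algebras over a locally compact Hausdorff space T. Suppose x ∈ ∏_{t∈T} A_t is such that: (a) for every s ∈ T and every ε > 0 there exist y_s ∈ B and a neighborhood V_s of s with ‖x_t − φ_t(y_s)‖ < ε for all t ∈ V_s, and (b) ‖x_t‖ → 0 as t → ∞ (i.e., for every ε > 0 there is a compact K ⊆ T with ‖x_t‖ < ε for t ∉ K). Then x is a section of the field, i.e., there exists y ∈ B with x_t = φ_t(y) for all t ∈ T. -/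
open scoped ZeroAtInfty

/-- A JB-algebra: a real Banach space with a commutative bilinear (Jordan)
multiplication making it a Banach algebra, satisfying `‖x²‖ = ‖x‖²` and
`‖x‖² ≤ ‖x² + y²‖`. -/
class JBAlgebra (A : Type*) extends NormedAddCommGroup A, Mul A where
  [toNormedSpace : NormedSpace ℝ A]
  [toCompleteSpace : CompleteSpace A]
  mul_comm' : ∀ x y : A, x * y = y * x
  add_mul' : ∀ x y z : A, (x + y) * z = x * z + y * z
  smul_mul' : ∀ (r : ℝ) (x y : A), (r • x) * y = r • (x * y)
  norm_mul_le' : ∀ x y : A, ‖x * y‖ ≤ ‖x‖ * ‖y‖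
  norm_sq' : ∀ x : A, ‖x * x‖ = ‖x‖ ^ 2
  norm_sq_add' : ∀ x y : A, ‖x‖ ^ 2 ≤ ‖x * x + y * y‖

attribute [instance] JBAlgebra.toNormedSpace JBAlgebra.toCompleteSpace

/-- A Jordan homomorphism between JB-algebras: real-linear and multiplicative. -/
def IsJordanHom {A B : Type*} [JBAlgebra A] [JBAlgebra B] (f : A → B) : Prop :=
  (∀ x y, f (x + y) = f x + f y) ∧ (∀ (r : ℝ) (x : A), f (r • x) = r • f x) ∧
    (∀ x y, f (x * y) = f x * f y)

/-- A continuous field of JB-algebras over `T`. -/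
structure IsContinuousFieldOfJB {T : Type*} [TopologicalSpace T]
    (B : Type*) [JBAlgebra B] (A : T → Type*) [∀ t, JBAlgebra (A t)]
    (φ : ∀ t, B → A t) : Prop where
  hom : ∀ t, IsJordanHom (φ t)
  surj : ∀ t, Function.Surjective (φ t)
  c0 : ∀ x : B, ∃ f : C₀(T, ℝ), ∀ t, f t = ‖φ t x‖
  norm_eq : ∀ x : B, ‖x‖ = ⨆ t, ‖φ t x‖
  module : ∀ (f : C₀(T, ℝ)) (x : B), ∃ fx : B, ∀ t, φ t fx = f t • φ t x

/-!
Cover a compact set outside of which `x` is small by finitely many neighbourhoods on which `x` is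
close to a section, and glue those sections with a subordinate partition of unity, using the
`C₀(T)`-module structure of `B`: this makes `x` a uniform limit of sections. Since `B` is complete
and `b ↦ (φ t b)ₜ` is isometric for the supremum norm, the sections form a closed set, so `x` is
itself a section.
-/

open Filter Topology

namespace IsJordanHom

variable {A₁ A₂ : Type*} [JBAlgebra A₁] [JBAlgebra A₂] {f : A₁ → A₂}

def toLinearMap (hf : IsJordanHom f) : A₁ →ₗ[ℝ] A₂ where
  toFun := f
  map_add' := hf.1
  map_smul' := hf.2.1

@[simp]
theorem coe_toLinearMap (hf : IsJordanHom f) : ⇑hf.toLinearMap = f := rfl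

end IsJordanHom

theorem norm_sub_sum_smul_le {E ι : Type*} [SeminormedAddCommGroup E] [NormedSpace ℝ E]
    (s : Finset ι) (w : ι → ℝ) (a : ι → E) (x : E) {ε : ℝ}
    (hw : ∀ i ∈ s, 0 ≤ w i) (hsum : ∑ i ∈ s, w i ≤ 1)
    (hx : ∑ i ∈ s, w i = 1 ∨ ‖x‖ ≤ ε) (ha : ∀ i ∈ s, w i ≠ 0 → ‖x - a i‖ ≤ ε) :
    ‖x - ∑ i ∈ s, w i • a i‖ ≤ ε := by
  set S := ∑ i ∈ s, w i
  have hsplit : x - ∑ i ∈ s, w i • a i = (1 - S) • x + ∑ i ∈ s, w i • (x - a i) := by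
    simp only [smul_sub, Finset.sum_sub_distrib, ← Finset.sum_smul, sub_smul, one_smul, S]
    abel
  have hfirst : (1 - S) * ‖x‖ ≤ (1 - S) * ε := by
    rcases hx with hS | hx
    · simp [hS]
    · exact mul_le_mul_of_nonneg_left hx (by linarith)
  have hterm : ∀ i ∈ s, w i * ‖x - a i‖ ≤ w i * ε := fun i hi => by
    rcases eq_or_ne (w i) 0 with h | h
    · simp [h]
    · exact mul_le_mul_of_nonneg_left (ha i hi h) (hw i hi)
  calc ‖x - ∑ i ∈ s, w i • a i‖
      ≤ ‖(1 - S) • x‖ + ∑ i ∈ s, ‖w i • (x - a i)‖ :=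
        hsplit ▸ (norm_add_le _ _).trans (add_le_add_right (norm_sum_le _ _) _)
    _ = (1 - S) * ‖x‖ + ∑ i ∈ s, w i * ‖x - a i‖ := by
        rw [norm_smul, Real.norm_of_nonneg (by linarith)]
        exact congrArg _ (Finset.sum_congr rfl fun i hi => by
          rw [norm_smul, Real.norm_of_nonneg (hw i hi)])
    _ ≤ (1 - S) * ε + ∑ i ∈ s, w i * ε := add_le_add hfirst (Finset.sum_le_sum hterm)
    _ = ε := by rw [← Finset.sum_mul]; ring

theorem exists_eq_of_forall_exists_norm_sub_le {T B : Type*} {A : T → Type*}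
    [NormedAddCommGroup B] [CompleteSpace B] [∀ t, NormedAddCommGroup (A t)]
    (φ : ∀ t, B →+ A t) (hle : ∀ t b, ‖φ t b‖ ≤ ‖b‖)
    (hge : ∀ b c, 0 ≤ c → (∀ t, ‖φ t b‖ ≤ c) → ‖b‖ ≤ c) (x : ∀ t, A t)
    (happrox : ∀ ε > (0 : ℝ), ∃ y, ∀ t, ‖x t - φ t y‖ ≤ ε) :
    ∃ y, ∀ t, x t = φ t y := by
  choose y hy using fun n : ℕ => happrox ((1 / 2) ^ n) (by positivity)
  have hdist : ∀ n m, n ≤ m → dist (y n) (y m) ≤ 2 * (1 / 2 : ℝ) ^ n := fun n m hnm => by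
    rw [dist_eq_norm]
    refine hge _ _ (by positivity) fun t => ?_
    have hmn : (1 / 2 : ℝ) ^ m ≤ (1 / 2) ^ n := pow_le_pow_of_le_one (by norm_num) (by norm_num) hnm
    calc ‖φ t (y n - y m)‖ = ‖(x t - φ t (y m)) - (x t - φ t (y n))‖ := by
          rw [map_sub, sub_sub_sub_cancel_left]
      _ ≤ (1 / 2) ^ m + (1 / 2) ^ n := (norm_sub_le _ _).trans (add_le_add (hy m t) (hy n t))
      _ ≤ 2 * (1 / 2) ^ n := by linarith
  have hε : Tendsto (fun n : ℕ => (1 / 2 : ℝ) ^ n) atTop (𝓝 0) :=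
    tendsto_pow_atTop_nhds_zero_of_lt_one (by norm_num) (by norm_num)
  obtain ⟨z, hz⟩ := cauchySeq_tendsto_of_complete
    (cauchySeq_of_le_tendsto_0' _ hdist (by simpa using hε.const_mul 2))
  refine ⟨z, fun t => tendsto_nhds_unique ?_
    (((AddMonoidHomClass.continuous_of_bound (φ t) 1 fun b => by simpa using hle t b).tendsto z).comp hz)⟩
  refine tendsto_iff_norm_sub_tendsto_zero.mpr (squeeze_zero (fun _ => norm_nonneg _) (fun n => ?_) hε)
  simpa only [Function.comp_apply, norm_sub_rev] using hy n t

namespace IsContinuousFieldOfJB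

variable {T : Type*} [TopologicalSpace T] {B : Type*} [JBAlgebra B]
  {A : T → Type*} [∀ t, JBAlgebra (A t)] {φ : ∀ t, B → A t}

theorem norm_apply_le (hF : IsContinuousFieldOfJB B A φ) (t : T) (b : B) : ‖φ t b‖ ≤ ‖b‖ := by
  obtain ⟨f, hf⟩ := hF.c0 b
  rw [hF.norm_eq b]
  refine le_ciSup (f := fun t => ‖φ t b‖) ⟨‖f.toBCF‖, ?_⟩ t
  rintro r ⟨s, rfl⟩
  calc ‖φ s b‖ = f s := (hf s).symm
    _ ≤ ‖f.toBCF s‖ := le_abs_self _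
    _ ≤ ‖f.toBCF‖ := BoundedContinuousFunction.norm_coe_le_norm _ _

theorem norm_le_of_forall_norm_apply_le (hF : IsContinuousFieldOfJB B A φ) {b : B} {c : ℝ}
    (hc : 0 ≤ c) (h : ∀ t, ‖φ t b‖ ≤ c) : ‖b‖ ≤ c :=
  hF.norm_eq b ▸ Real.iSup_le h hc

theorem exists_forall_norm_sub_le [LocallyCompactSpace T] [T2Space T]
    (hF : IsContinuousFieldOfJB B A φ) (x : ∀ t, A t)
    (happrox : ∀ s : T, ∀ ε > (0 : ℝ), ∃ ys : B, ∃ V ∈ 𝓝 s, ∀ t ∈ V, ‖x t - φ t ys‖ < ε)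
    (hvanish : ∀ ε > (0 : ℝ), ∃ K : Set T, IsCompact K ∧ ∀ t ∉ K, ‖x t‖ < ε)
    {ε : ℝ} (hε : 0 < ε) : ∃ y : B, ∀ t, ‖x t - φ t y‖ ≤ ε := by
  obtain ⟨K, hK, hKx⟩ := hvanish ε hε
  choose ys V hV hys using fun s : T => happrox s ε hε
  obtain ⟨F, -, hKF⟩ := hK.elim_nhds_subcover (fun s => interior (V s))
    (fun s _ => interior_mem_nhds.mpr (hV s))
  obtain ⟨p, hpV, hpc⟩ := PartitionOfUnity.exists_isSubordinate_of_locallyFinite_t2space hK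
    (fun i : F => interior (V i)) (fun _ => isOpen_interior) (locallyFinite_of_finite _)
    (hKF.trans (Set.iUnion₂_subset fun s hs => Set.subset_iUnion_of_subset ⟨s, hs⟩ subset_rfl))
  choose z hz using fun i : F => hF.module ⟨p i, (hpc i).is_zero_at_infty⟩ (ys i)
  refine ⟨∑ i, z i, fun t => ?_⟩
  have hφ : φ t (∑ i, z i) = ∑ i, p i t • φ t (ys i) := by
    rw [← (hF.hom t).coe_toLinearMap, map_sum]
    exact Finset.sum_congr rfl fun i _ => hz i t
  rw [hφ]
  refine norm_sub_sum_smul_le _ _ _ _ (fun i _ => p.nonneg i t) ?_ ?_ fun i _ hi => ?_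
  · simpa [finsum_eq_sum_of_fintype] using p.sum_le_one t
  · by_cases ht : t ∈ K
    · simpa [finsum_eq_sum_of_fintype] using Or.inl (p.sum_eq_one ht)
    · exact Or.inr (hKx t ht).le
  · exact (hys i t (interior_subset (hpV i (subset_tsupport _ hi)))).le

end IsContinuousFieldOfJB

/-- Local uniform approximability by sections together with vanishing at
infinity implies being a section. -/
theorem stmt4 {T : Type*} [TopologicalSpace T] [LocallyCompactSpace T] [T2Space T]
    {B : Type*} [JBAlgebra B] {A : T → Type*} [∀ t, JBAlgebra (A t)]
    (φ : ∀ t, B → A t) (hfield : IsContinuousFieldOfJB B A φ)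
    (x : ∀ t, A t)
    (happrox : ∀ s : T, ∀ ε > (0 : ℝ), ∃ ys : B, ∃ V ∈ nhds s,
      ∀ t ∈ V, ‖x t - φ t ys‖ < ε)
    (hvanish : ∀ ε > (0 : ℝ), ∃ K : Set T, IsCompact K ∧ ∀ t ∉ K, ‖x t‖ < ε) :
    ∃ y : B, ∀ t, x t = φ t y :=
  exists_eq_of_forall_exists_norm_sub_le (fun t => (hfield.hom t).toLinearMap.toAddMonoidHom)
    hfield.norm_apply_le (fun _ _ hc => hfield.norm_le_of_forall_norm_apply_le hc) x
    fun _ hε => hfield.exists_forall_norm_sub_le x happrox hvanish hε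
end

section
/- Let (B, {A_t, φ_t}_{t∈T}) be a continuous field of JB-algebras over a locally compact Hausdorff space T, and let x ∈ ∏_{t∈T} A_t. If for every z ∈ B the function t ↦ ‖x_t − φ_t(z)‖ lies in C₀(T), then x is a section of the field, i.e., there exists y ∈ B with x_t = φ_t(y) for all t. -/
open scoped ZeroAtInfty

/-!
Near each point `s`, some `φ_t(z_s)` is `ε`-close to `x_t` (surjectivity of `φ_s` and
continuity of `t ↦ ‖x_t - φ_t(z_s)‖`); outside a compact set `x` itself is `ε`-small.
Gluing finitely many `z_s` with a compactly supported partition of unity on that compact set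
(using the `C₀(T)`-module structure of `B`) gives `z ∈ B` with `sup_t ‖x_t - φ_t(z)‖ ≤ ε`.
Since `‖·‖_B = sup_t ‖φ_t(·)‖`, the `2⁻ⁿ`-approximants form a Cauchy sequence in `B`, and its
limit `y` satisfies `x_t = φ_t(y)`.
-/

open Filter Topology Set

def IsJordanHom.toLinearMap_s5 {A B : Type*} [JBAlgebra A] [JBAlgebra B] {f : A → B}
    (hf : IsJordanHom f) : A →ₗ[ℝ] B :=
  ⟨⟨f, hf.1⟩, hf.2.1⟩

theorem IsContinuousFieldOfJB.norm_map_le {T : Type*} [TopologicalSpace T] {B : Type*}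
    [JBAlgebra B] {A : T → Type*} [∀ t, JBAlgebra (A t)] {φ : ∀ t, B → A t}
    (hfield : IsContinuousFieldOfJB B A φ) (t : T) (w : B) : ‖φ t w‖ ≤ ‖w‖ := by
  obtain ⟨f, hf⟩ := hfield.c0 w
  have hbdd : BddAbove (range fun t => ‖φ t w‖) := by
    simpa only [← hf] using f.isBounded_range.bddAbove
  exact hfield.norm_eq w ▸ le_ciSup hbdd t

theorem norm_sub_sum_smul_le_s5 {ι E : Type*} [Fintype ι] [NormedAddCommGroup E] [NormedSpace ℝ E]
    {c : ι → ℝ} {x : E} {v : ι → E} {ε : ℝ} (hc₀ : ∀ i, 0 ≤ c i) (hc₁ : ∑ i, c i ≤ 1)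
    (hv : ∀ i, c i ≠ 0 → ‖x - v i‖ ≤ ε) (hx : ∑ i, c i = 1 ∨ ‖x‖ ≤ ε) :
    ‖x - ∑ i, c i • v i‖ ≤ ε := by
  set S := ∑ i, c i
  have hsplit : x - ∑ i, c i • v i = (1 - S) • x + ∑ i, c i • (x - v i) := by
    simp only [smul_sub, Finset.sum_sub_distrib, ← Finset.sum_smul, S]
    module
  have hout : ‖(1 - S) • x‖ ≤ (1 - S) * ε := by
    rw [norm_smul, Real.norm_of_nonneg (sub_nonneg.mpr hc₁)]
    rcases hx with hS | hx
    · simp [hS]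
    · exact mul_le_mul_of_nonneg_left hx (sub_nonneg.mpr hc₁)
  have hin : ‖∑ i, c i • (x - v i)‖ ≤ S * ε := by
    refine (norm_sum_le _ _).trans ?_
    rw [Finset.sum_mul]
    refine Finset.sum_le_sum fun i _ => ?_
    rw [norm_smul, Real.norm_of_nonneg (hc₀ i)]
    rcases eq_or_ne (c i) 0 with hci | hci
    · simp [hci]
    · exact mul_le_mul_of_nonneg_left (hv i hci) (hc₀ i)
  calc ‖x - ∑ i, c i • v i‖ ≤ ‖(1 - S) • x‖ + ‖∑ i, c i • (x - v i)‖ :=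
        hsplit ▸ norm_add_le _ _
    _ ≤ (1 - S) * ε + S * ε := add_le_add hout hin
    _ = ε := by ring

theorem exists_forall_norm_sub_map_le {T : Type*} [TopologicalSpace T] [LocallyCompactSpace T]
    [T2Space T] {B : Type*} [AddCommGroup B] [Module ℝ B] {A : T → Type*}
    [∀ t, NormedAddCommGroup (A t)] [∀ t, NormedSpace ℝ (A t)]
    (φ : ∀ t, B →ₗ[ℝ] A t) (hsurj : ∀ t, Function.Surjective (φ t))
    (hmod : ∀ (f : C₀(T, ℝ)) (z : B), ∃ w : B, ∀ t, φ t w = f t • φ t z)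
    (x : ∀ t, A t) (hx : ∀ z : B, ∃ f : C₀(T, ℝ), ∀ t, f t = ‖x t - φ t z‖)
    {ε : ℝ} (hε : 0 < ε) : ∃ z : B, ∀ t, ‖x t - φ t z‖ ≤ ε := by
  obtain ⟨f₀, hf₀⟩ := hx 0
  obtain ⟨K, hK, hKc⟩ := mem_cocompact.mp (f₀.zero_at_infty'.eventually (gt_mem_nhds hε))
  choose z hz using fun s => hsurj s (x s)
  let V : T → Set T := fun s => {t | ‖x t - φ t (z s)‖ < ε}
  have hV : ∀ s, IsOpen (V s) := fun s => by
    obtain ⟨f, hf⟩ := hx (z s)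
    simpa only [V, ← hf] using isOpen_lt (map_continuous f) continuous_const
  obtain ⟨I, hI⟩ := hK.elim_finite_subcover V hV
    fun s _ => mem_iUnion.mpr ⟨s, by simp [V, hz s, hε]⟩
  obtain ⟨p, hpV, hpc⟩ := PartitionOfUnity.exists_isSubordinate_of_locallyFinite_t2space hK
    (fun i : I => V i) (fun i => hV i) (locallyFinite_of_finite _) fun a ha => by
      obtain ⟨i, hi, ha⟩ := mem_iUnion₂.mp (hI ha)
      exact mem_iUnion.mpr ⟨⟨i, hi⟩, ha⟩
  choose w hw using fun i : I => hmod ⟨p i, (hpc i).is_zero_at_infty⟩ (z i)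
  refine ⟨∑ i, w i, fun t => ?_⟩
  have hφw : φ t (∑ i, w i) = ∑ i, p i t • φ t (z i) := by
    simp only [map_sum, hw]
    rfl
  rw [hφw]
  refine norm_sub_sum_smul_le_s5 (fun i => p.nonneg i t) ?_ (fun i hi => ?_) ?_
  · simpa only [finsum_eq_sum_of_fintype] using p.sum_le_one t
  · exact (hpV i (subset_tsupport _ hi)).le
  · by_cases ht : t ∈ K
    · left
      simpa only [finsum_eq_sum_of_fintype] using p.sum_eq_one ht
    · right
      simpa [hf₀] using (show f₀ t < ε from hKc ht).le

theorem exists_forall_eq_map_of_forall_approx {T B : Type*} [NormedAddCommGroup B]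
    [NormedSpace ℝ B] [CompleteSpace B] {A : T → Type*} [∀ t, NormedAddCommGroup (A t)]
    [∀ t, NormedSpace ℝ (A t)] (φ : ∀ t, B →ₗ[ℝ] A t) (hle : ∀ t w, ‖φ t w‖ ≤ ‖w‖)
    (hnorm : ∀ w, ‖w‖ = ⨆ t, ‖φ t w‖) (x : ∀ t, A t)
    (happrox : ∀ ε > 0, ∃ z : B, ∀ t, ‖x t - φ t z‖ ≤ ε) : ∃ y : B, ∀ t, x t = φ t y := by
  choose z hz using fun n : ℕ => happrox ((1 / 2) ^ n) (by positivity)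
  have hdist : ∀ n, dist (z n) (z (n + 1)) ≤ 4 / 2 / 2 ^ n := fun n => by
    rw [dist_eq_norm, hnorm]
    refine Real.iSup_le (fun t => ?_) (by positivity)
    calc ‖φ t (z n - z (n + 1))‖ = ‖(x t - φ t (z (n + 1))) - (x t - φ t (z n))‖ := by
          rw [map_sub, sub_sub_sub_cancel_left]
      _ ≤ (1 / 2) ^ (n + 1) + (1 / 2) ^ n := norm_sub_le_of_le (hz _ t) (hz n t)
      _ ≤ 4 / 2 / 2 ^ n := by
          rw [pow_succ, one_div_pow]
          field_simp
          norm_num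
  obtain ⟨y, hy⟩ := cauchySeq_tendsto_of_complete (cauchySeq_of_le_geometric_two hdist)
  refine ⟨y, fun t => sub_eq_zero.mp
    (tendsto_nhds_unique (f := fun n => x t - φ t (z n)) (l := atTop) ?_ ?_)⟩
  · exact tendsto_const_nhds.sub
      ((AddMonoidHomClass.continuous_of_bound (φ t) 1 fun w => by simpa using hle t w).tendsto y
        |>.comp hy)
  · exact squeeze_zero_norm (fun n => hz n t)
      (tendsto_pow_atTop_nhds_zero_of_lt_one (by norm_num) (by norm_num))

/-- If `t ↦ ‖x t - φ t z‖` lies in `C₀(T)` for every `z ∈ B`, then `x` is a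
section of the continuous field. -/
theorem stmt5 {T : Type*} [TopologicalSpace T] [LocallyCompactSpace T] [T2Space T]
    {B : Type*} [JBAlgebra B] {A : T → Type*} [∀ t, JBAlgebra (A t)]
    (φ : ∀ t, B → A t) (hfield : IsContinuousFieldOfJB B A φ)
    (x : ∀ t, A t)
    (hx : ∀ z : B, ∃ f : C₀(T, ℝ), ∀ t, f t = ‖x t - φ t z‖) :
    ∃ y : B, ∀ t, x t = φ t y :=
  let ψ t := (hfield.hom t).toLinearMap_s5
  exists_forall_eq_map_of_forall_approx ψ hfield.norm_map_le hfield.norm_eq x fun _ hε =>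
    exists_forall_norm_sub_map_le ψ hfield.surj hfield.module x hx hε
end
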